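/- arXiv:0904.4854 — 2 statements merged into one kernel-verified Lean document; each statement's English description precedes it below -/
import Mathlib

section
/- The elements α_{λ;n} := Σ (σ,d), summed over pairs with d ⊆ {1,…,n}, |d| = |λ|, and σ a permutation of d of cycle type λ, form a linear basis of the invariant algebra A_n, indexed by partitions λ with |λ| ≤ n. -/
/-!
An element of `B_n` is `S_n`-invariant iff its coefficient function is constant on the orbits of
the conjugation action on partial permutations. These orbits are exactly the fibres of the cycle
type map `typePP`: if `(σ, d)` and `(σ', d')` have the same type, conjugating `σ` to `σ'` moves
`d` to a set of size `|d'|` containing `supp σ'`, and a permutation fixing `supp σ'` pointwise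
(hence commuting with `σ'`) then moves it onto `d'`. The image of `typePP` is the set of
partitions of size at most `n`, and `α_{λ;n}` is the indicator of the fibre over `λ`; the
indicators of the nonempty fibres of any map form a basis of the fibrewise constant elements.
-/

abbrev PPn (n : ℕ) : Type := {p : Equiv.Perm (Fin n) × Finset (Fin n) // ∀ x ∉ p.2, p.1 x = x}

instance (n : ℕ) : Monoid (PPn n) where
  mul p q := ⟨(p.1.1 * q.1.1, p.1.2 ∪ q.1.2), by
    intro x hx
    simp only [Finset.mem_union, not_or] at hx
    simp [Equiv.Perm.mul_apply, q.2 x hx.2, p.2 x hx.1]⟩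
  one := ⟨(1, ∅), fun x _ => rfl⟩
  mul_assoc p q r := Subtype.ext (Prod.ext (mul_assoc _ _ _) (Finset.union_assoc _ _ _))
  one_mul p := Subtype.ext (Prod.ext (one_mul _) (Finset.empty_union _))
  mul_one p := Subtype.ext (Prod.ext (mul_one _) (Finset.union_empty _))

abbrev Bn (n : ℕ) : Type := MonoidAlgebra ℚ (PPn n)

def ppSwap {n : ℕ} (j i : Fin n) : PPn n := ⟨(Equiv.swap j i, {j, i}), by
  intro x hx
  simp only [Finset.mem_insert, Finset.mem_singleton, not_or] at hx
  exact Equiv.swap_apply_of_ne_of_ne hx.1 hx.2⟩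

noncomputable def xi (n : ℕ) (i : Fin n) : Bn n :=
  ∑ j ∈ Finset.univ.filter (· < i), MonoidAlgebra.of ℚ (PPn n) (ppSwap j i)

/-- The action of `τ ∈ S_n` on partial permutations: `τ·(σ,d) = (τστ⁻¹, τ(d))`. -/
def conjPP {n : ℕ} (τ : Equiv.Perm (Fin n)) (p : PPn n) : PPn n :=
  ⟨(τ * p.1.1 * τ⁻¹, p.1.2.image τ), by
    intro x hx
    have hx' : τ⁻¹ x ∉ p.1.2 := fun h => hx (Finset.mem_image.mpr ⟨_, h, by simp⟩)
    show τ (p.1.1 (τ⁻¹ x)) = x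
    rw [p.2 _ hx']
    simp⟩

/-- `conjPP τ` as a monoid homomorphism. -/
def conjHom {n : ℕ} (τ : Equiv.Perm (Fin n)) : PPn n →* PPn n where
  toFun := conjPP τ
  map_one' := Subtype.ext (Prod.ext (by show τ * 1 * τ⁻¹ = 1; group)
    (by show (∅ : Finset (Fin n)).image τ = ∅; simp))
  map_mul' p q := Subtype.ext (Prod.ext
    (by show τ * (p.1.1 * q.1.1) * τ⁻¹ = (τ * p.1.1 * τ⁻¹) * (τ * q.1.1 * τ⁻¹); group)
    (by show (p.1.2 ∪ q.1.2).image τ = p.1.2.image τ ∪ q.1.2.image τ;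
        exact Finset.image_union _ _))

/-- The invariant subalgebra `A_n` : fixed points of the `S_n`-action on `B_n`. -/
noncomputable def An (n : ℕ) : Subalgebra ℚ (Bn n) where
  carrier := {x | ∀ τ : Equiv.Perm (Fin n),
    MonoidAlgebra.mapDomainAlgHom ℚ ℚ (conjHom τ) x = x}
  add_mem' hx hy := fun τ => by rw [map_add, hx τ, hy τ]
  mul_mem' hx hy := fun τ => by rw [map_mul, hx τ, hy τ]
  algebraMap_mem' c := fun τ => by rw [AlgHom.commutes]

/-- The cycle type of a partial permutation `(σ,d)`, as a partition of `|d|`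
(fixed points of `σ` inside `d` contribute parts equal to `1`). -/
def typePP {n : ℕ} (p : PPn n) : Multiset ℕ :=
  p.1.1.cycleType + Multiset.replicate (p.1.2.card - p.1.1.support.card) 1

/-- The invariant element `α_{λ;n}`: sum of all partial permutations of cycle type `λ`. -/
noncomputable def alphaM (n : ℕ) (m : Multiset ℕ) : Bn n :=
  ∑ p : PPn n, if typePP p = m then MonoidAlgebra.of ℚ (PPn n) p else 0

open Equiv Finset

theorem Finset.exists_perm_image_eq {α : Type*} [DecidableEq α] {s t : Finset α}
    (h : s.card = t.card) : ∃ π : Perm α, s.image π = t := by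
  obtain ⟨π, hπ⟩ := (Set.powersetCard.isPretransitive (α := α) (n := t.card)).exists_smul_eq
    ⟨s, h⟩ ⟨t, rfl⟩
  refine ⟨π, ?_⟩
  have := congrArg Subtype.val hπ
  simpa [smul_finset_def] using this

theorem Finset.exists_perm_fixing_image_eq {α : Type*} [Fintype α] [DecidableEq α]
    {S D₁ D₂ : Finset α} (h₁ : S ⊆ D₁) (h₂ : S ⊆ D₂) (h : D₁.card = D₂.card) :
    ∃ ρ : Perm α, (∀ x ∈ S, ρ x = x) ∧ D₁.image ρ = D₂ := by
  have hcard : (D₁.subtype (· ∉ S)).card = (D₂.subtype (· ∉ S)).card := by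
    simp only [card_subtype, filter_notMem_eq_sdiff, card_sdiff_of_subset h₁,
      card_sdiff_of_subset h₂, h]
  obtain ⟨π, hπ⟩ := exists_perm_image_eq hcard
  refine ⟨Perm.ofSubtype π, fun x hx => Perm.ofSubtype_apply_of_not_mem π (not_not.mpr hx),
    ?_⟩
  refine eq_of_subset_of_card_le (fun y hy => ?_)
    (by rw [card_image_of_injective _ (Perm.ofSubtype π).injective, h])
  obtain ⟨x, hx, rfl⟩ := mem_image.mp hy
  by_cases hxS : x ∈ S
  · rw [Perm.ofSubtype_apply_of_not_mem π (not_not.mpr hxS)]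
    exact h₂ hxS
  · rw [Perm.ofSubtype_apply_of_mem π hxS]
    have : π ⟨x, hxS⟩ ∈ D₂.subtype (· ∉ S) :=
      hπ ▸ mem_image_of_mem π (mem_subtype.mpr hx)
    exact mem_subtype.mp this

theorem Multiset.filter_two_le_add_replicate {m : Multiset ℕ} (hm : ∀ a ∈ m, 0 < a) :
    m.filter (2 ≤ ·) + Multiset.replicate (m.sum - (m.filter (2 ≤ ·)).sum) 1 = m := by
  have hones : m.filter (¬ 2 ≤ ·) = Multiset.replicate (m.filter (¬ 2 ≤ ·)).card 1 :=
    Multiset.eq_replicate_card.mpr fun a ha => by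
      have := hm a (Multiset.mem_of_mem_filter ha)
      have := Multiset.of_mem_filter ha
      omega
  have hsum : m.sum - (m.filter (2 ≤ ·)).sum = (m.filter (¬ 2 ≤ ·)).card := by
    have := congrArg Multiset.sum (Multiset.filter_add_not (2 ≤ ·) m)
    rw [Multiset.sum_add, hones, Multiset.sum_replicate, smul_eq_mul, mul_one] at this
    omega
  rw [hsum, ← hones, Multiset.filter_add_not]

namespace MonoidAlgebra

variable (R : Type*) {M ι : Type*} [Semiring R]

noncomputable def fiberSum [MulOneClass M] [Fintype M] [DecidableEq ι] (f : M → ι) (i : ι) :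
    MonoidAlgebra R M :=
  ∑ p, if f p = i then of R M p else 0

def fiberwiseConstant (f : M → ι) : Submodule R (MonoidAlgebra R M) where
  carrier := {x | ∀ p q, f p = f q → x.coeff p = x.coeff q}
  add_mem' hx hy p q h := by simp only [coeff_add, Finsupp.add_apply, hx p q h, hy p q h]
  zero_mem' _ _ _ := rfl
  smul_mem' c x hx p q h := by simp only [coeff_smul, Finsupp.smul_apply, hx p q h]

variable {R} [MulOneClass M] [Fintype M] [DecidableEq ι] {f : M → ι}

theorem coeff_fiberSum (i : ι) (p : M) :
    (fiberSum R f i).coeff p = if f p = i then 1 else 0 := by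
  classical
  simp only [fiberSum, coeff_sum, Finsupp.finsetSum_apply,
    apply_ite (fun x : MonoidAlgebra R M => x.coeff p), of_apply, coeff_single,
    Finsupp.single_apply, coeff_zero, Finsupp.coe_zero, Pi.zero_apply]
  rw [Fintype.sum_eq_single p fun q hq => by simp [hq]]
  simp

theorem fiberSum_mem_fiberwiseConstant (i : ι) : fiberSum R f i ∈ fiberwiseConstant R f :=
  fun p q h => by rw [coeff_fiberSum, coeff_fiberSum, h]

theorem linearIndependent_fiberSum {R : Type*} [Ring R] {s : Set ι} (hs : s ⊆ Set.range f) :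
    LinearIndependent R (fun i : s => fiberSum R f i) := by
  rw [linearIndependent_iff']
  intro t g hg i hi
  obtain ⟨p, hp⟩ := hs i.2
  have := congrArg (fun x => x.coeff p) hg
  simpa [coeff_sum, coeff_fiberSum, hp, Subtype.val_inj, hi] using this

theorem span_fiberSum {s : Set ι} (hs : Set.range f ⊆ s) :
    Submodule.span R (Set.range fun i : s => fiberSum R f i) = fiberwiseConstant R f := by
  refine le_antisymm (Submodule.span_le.mpr ?_) fun x hx => ?_
  · rintro _ ⟨i, rfl⟩
    exact fiberSum_mem_fiberwiseConstant (f := f) i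
  have hx_eq : x = ∑ i ∈ (univ : Finset M).image f,
      x.coeff (Function.invFun f i) • fiberSum R f i := by
    ext p
    simp only [coeff_sum, Finsupp.finsetSum_apply, coeff_smul, Finsupp.smul_apply,
      coeff_fiberSum, smul_eq_mul, mul_ite, mul_one, mul_zero, sum_ite_eq,
      mem_image_of_mem f (mem_univ p), if_true]
    exact hx _ _ (Function.invFun_eq ⟨p, rfl⟩).symm
  rw [hx_eq]
  exact Submodule.sum_mem _ fun i hi => Submodule.smul_mem _ _ (Submodule.subset_span
    ⟨⟨i, hs (by simpa using hi)⟩, rfl⟩)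

end MonoidAlgebra

section PartialPermutation

variable {n : ℕ}

theorem support_subset_domain (p : PPn n) : p.1.1.support ⊆ p.1.2 := fun x hx => by
  by_contra h
  exact Perm.mem_support.mp hx (p.2 x h)

theorem conjPP_mul (τ τ' : Perm (Fin n)) (p : PPn n) :
    conjPP (τ * τ') p = conjPP τ (conjPP τ' p) :=
  Subtype.ext (Prod.ext (by simp [conjPP, mul_assoc]) (by simp [conjPP, Finset.image_image]))

theorem conjPP_inv_conjPP (τ : Perm (Fin n)) (p : PPn n) : conjPP τ⁻¹ (conjPP τ p) = p :=
  Subtype.ext (Prod.ext (by simp [conjPP, mul_assoc]) (by simp [conjPP, Finset.image_image]))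

theorem conjPP_injective (τ : Perm (Fin n)) : Function.Injective (conjPP (n := n) τ) :=
  Function.LeftInverse.injective (conjPP_inv_conjPP τ)

theorem conjPP_surjective (τ : Perm (Fin n)) : Function.Surjective (conjPP (n := n) τ) :=
  fun p => ⟨conjPP τ⁻¹ p, by simpa using conjPP_inv_conjPP τ⁻¹ p⟩

theorem typePP_conjPP (τ : Perm (Fin n)) (p : PPn n) : typePP (conjPP τ p) = typePP p := by
  simp only [typePP, conjPP, Perm.cycleType_conj, Perm.support_conj, card_map,
    card_image_of_injective _ τ.injective]

theorem sum_typePP (p : PPn n) : (typePP p).sum = p.1.2.card := by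
  have := card_le_card (support_subset_domain p)
  rw [typePP, Multiset.sum_add, Perm.sum_cycleType, Multiset.sum_replicate, smul_eq_mul, mul_one]
  omega

theorem filter_two_le_typePP (p : PPn n) : (typePP p).filter (2 ≤ ·) = p.1.1.cycleType := by
  rw [typePP, Multiset.filter_add, Multiset.filter_eq_self.mpr fun a ha =>
    Perm.two_le_of_mem_cycleType ha, Multiset.filter_eq_nil.mpr fun a ha => ?_, add_zero]
  rw [Multiset.eq_of_mem_replicate ha]
  omega

theorem exists_conjPP_eq_of_fst_eq {p q : PPn n} (h₁ : p.1.1 = q.1.1)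
    (h₂ : p.1.2.card = q.1.2.card) : ∃ τ : Perm (Fin n), conjPP τ p = q := by
  obtain ⟨ρ, hρS, hρD⟩ := exists_perm_fixing_image_eq (h₁ ▸ support_subset_domain p)
    (support_subset_domain q) h₂
  have hcomm : Commute ρ q.1.1 := by
    refine Perm.Disjoint.commute fun x => ?_
    by_cases hx : x ∈ q.1.1.support
    · exact Or.inl (hρS x hx)
    · exact Or.inr (Perm.notMem_support.mp hx)
  refine ⟨ρ, Subtype.ext (Prod.ext ?_ hρD)⟩
  show ρ * p.1.1 * ρ⁻¹ = q.1.1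
  rw [h₁, hcomm.eq, mul_inv_cancel_right]

theorem exists_conjPP_eq {p q : PPn n} (h : typePP p = typePP q) :
    ∃ τ : Perm (Fin n), conjPP τ p = q := by
  have hcycle : p.1.1.cycleType = q.1.1.cycleType := by
    rw [← filter_two_le_typePP, ← filter_two_le_typePP, h]
  obtain ⟨c, hc⟩ := isConj_iff.mp (Perm.isConj_of_cycleType_eq hcycle)
  have hcard : (conjPP c p).1.2.card = q.1.2.card := by
    rw [← sum_typePP, ← sum_typePP, typePP_conjPP, h]
  obtain ⟨ρ, hρ⟩ := exists_conjPP_eq_of_fst_eq hc hcard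
  exact ⟨ρ * c, by rw [conjPP_mul, hρ]⟩

theorem range_typePP :
    Set.range (typePP (n := n)) = {m | (∀ a ∈ m, 0 < a) ∧ m.sum ≤ n} := by
  ext m
  constructor
  · rintro ⟨p, rfl⟩
    refine ⟨fun a ha => ?_, by simpa [sum_typePP] using card_le_univ p.1.2⟩
    rcases Multiset.mem_add.mp ha with ha | ha
    · exact zero_lt_two.trans_le (Perm.two_le_of_mem_cycleType ha)
    · rw [Multiset.eq_of_mem_replicate ha]
      exact one_pos
  · rintro ⟨hpos, hsum⟩
    have hm₂ : (m.filter (2 ≤ ·)).sum ≤ m.sum := by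
      conv_rhs => rw [← Multiset.filter_add_not (2 ≤ ·) m, Multiset.sum_add]
      exact Nat.le_add_right _ _
    set m₂ := m.filter (2 ≤ ·)
    obtain ⟨σ, hσ⟩ := (Perm.exists_with_cycleType_iff (Fin n)).mpr
      ⟨by simpa using hm₂.trans hsum, fun a ha => Multiset.of_mem_filter ha⟩
    have hsupp : σ.support.card = m₂.sum := by rw [← Perm.sum_cycleType, hσ]
    obtain ⟨d, hσd, -, hd⟩ := exists_subsuperset_card_eq (subset_univ σ.support)
      (hsupp.trans_le hm₂) (by simpa using hsum)
    refine ⟨⟨(σ, d), fun x hx => Perm.notMem_support.mp fun hσx => hx (hσd hσx)⟩, ?_⟩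
    change σ.cycleType + Multiset.replicate (d.card - σ.support.card) 1 = m
    rw [hσ, hd, hsupp, Multiset.filter_two_le_add_replicate hpos]

theorem alphaM_eq_fiberSum : alphaM n = MonoidAlgebra.fiberSum ℚ typePP := rfl

theorem coeff_mapDomainAlgHom_conjHom (τ : Perm (Fin n)) (x : Bn n) (p : PPn n) :
    (MonoidAlgebra.mapDomainAlgHom ℚ ℚ (conjHom τ) x).coeff (conjPP τ p) = x.coeff p :=
  Finsupp.mapDomain_apply (conjPP_injective τ) _ _

theorem toSubmodule_An :
    Subalgebra.toSubmodule (An n) = MonoidAlgebra.fiberwiseConstant ℚ typePP := by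
  ext x
  change (∀ τ, _ = x) ↔ ∀ p q, typePP p = typePP q → x.coeff p = x.coeff q
  constructor
  · intro hx p q hpq
    obtain ⟨τ, rfl⟩ := exists_conjPP_eq hpq
    rw [← coeff_mapDomainAlgHom_conjHom τ, hx τ]
  · intro hx τ
    refine MonoidAlgebra.coeff_injective (Finsupp.ext fun q => ?_)
    obtain ⟨p, rfl⟩ := conjPP_surjective τ q
    rw [coeff_mapDomainAlgHom_conjHom, hx _ _ (typePP_conjPP τ p)]

end PartialPermutation

/-- the `α_{λ;n}`, for `λ` a partition with `|λ| ≤ n`, form a linear basis of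
the invariant algebra `A_n`. -/
theorem alpha_basis (n : ℕ) :
    LinearIndependent ℚ
      (fun m : {m : Multiset ℕ // (∀ a ∈ m, 0 < a) ∧ m.sum ≤ n} => alphaM n m.1) ∧
    Submodule.span ℚ
      (Set.range fun m : {m : Multiset ℕ // (∀ a ∈ m, 0 < a) ∧ m.sum ≤ n} => alphaM n m.1)
      = Subalgebra.toSubmodule (An n) := by
  rw [alphaM_eq_fiberSum, toSubmodule_An]
  exact ⟨MonoidAlgebra.linearIndependent_fiberSum range_typePP.ge,
    MonoidAlgebra.span_fiberSum range_typePP.le⟩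
end

section
/- In ℚ[S_{n+1}], let E : ℚ[S_{n+1}] → ℚ[S_n] be the linear map with E(σ) = σ restricted to {1,…,n} if σ(n+1) = n+1 and E(σ) = 0 otherwise. Then for every r ≥ 0, M_n^r := E(X_{n+1}^r) is a central element of ℚ[S_n], where X_{n+1} = (1 n+1) + ⋯ + (n n+1). -/
/-- The group algebra `ℚ[S_m]`. -/
abbrev QSn (m : ℕ) : Type := MonoidAlgebra ℚ (Equiv.Perm (Fin m))

/-- Restriction to `{1,…,n}` of a permutation of `{1,…,n+1}` (meaningful when it fixes the
last point). -/
noncomputable def restrictLast (n : ℕ) (σ : Equiv.Perm (Fin (n + 1))) : Equiv.Perm (Fin n) :=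
  Equiv.removeNone ((finSuccEquivLast (n := n)).permCongr σ)

/-- The linear map `E : ℚ[S_{n+1}] → ℚ[S_n]`, `σ ↦ σ|_{{1,…,n}}` if `σ(n+1) = n+1`, else `0`. -/
noncomputable def Emap (n : ℕ) : QSn (n + 1) →ₗ[ℚ] QSn n :=
  (MonoidAlgebra.coeffLinearEquiv ℚ).symm.toLinearMap ∘ₗ (Finsupp.lsum ℚ fun σ =>
    if σ (Fin.last n) = Fin.last n then Finsupp.lsingle (restrictLast n σ) else 0) ∘ₗ
    (MonoidAlgebra.coeffLinearEquiv ℚ).toLinearMap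

/-- The Jucys-Murphy element `X_{n+1} = (1 n+1) + ⋯ + (n n+1)`. -/
noncomputable def XJM (n : ℕ) : QSn (n + 1) :=
  ∑ j : Fin n, MonoidAlgebra.of ℚ (Equiv.Perm (Fin (n + 1))) (Equiv.swap j.castSucc (Fin.last n))

/-!
`E` is a bimodule map over `ℚ[S_n]`, where `S_n ⊆ S_{n+1}` fixes `n+1`: the factors fixing `n+1`
pass through `E`. Conjugation by such a `π` permutes the transpositions `(j n+1)`, so `X_{n+1}`
and all its powers commute with `S_n`, and hence `E(X_{n+1}^r)` commutes with every `π ∈ S_n`.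
-/

open Equiv MonoidAlgebra

theorem MonoidAlgebra.mem_center_of_forall_commute_of {k G : Type*} [CommSemiring k] [Monoid G]
    {z : MonoidAlgebra k G} (h : ∀ g, Commute (of k G g) z) :
    z ∈ Subalgebra.center k (MonoidAlgebra k G) := by
  rw [Subalgebra.mem_center_iff]
  intro b
  induction b using MonoidAlgebra.induction_on with
  | of g => exact (h g).eq
  | add x y hx hy => rw [add_mul, mul_add, hx, hy]
  | smul c x hx => rw [smul_mul_assoc, mul_smul_comm, hx]

noncomputable def liftLast (n : ℕ) : Perm (Fin n) →* Perm (Fin (n + 1)) :=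
  (finSuccEquivLast (n := n)).symm.permCongrHom.toMonoidHom.comp
    { toFun := optionCongr
      map_one' := optionCongr_one
      map_mul' := fun σ τ => optionCongr_trans τ σ }

section liftLast

variable {n : ℕ}

theorem liftLast_apply (π : Perm (Fin n)) :
    liftLast n π = (finSuccEquivLast (n := n)).symm.permCongr π.optionCongr :=
  rfl

@[simp]
theorem liftLast_apply_last (π : Perm (Fin n)) : liftLast n π (Fin.last n) = Fin.last n := by
  simp [liftLast_apply, finSuccEquivLast_last]

@[simp]
theorem liftLast_apply_castSucc (π : Perm (Fin n)) (i : Fin n) :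
    liftLast n π i.castSucc = (π i).castSucc := by
  simp [liftLast_apply, finSuccEquivLast_castSucc]

@[simp]
theorem restrictLast_liftLast (π : Perm (Fin n)) : restrictLast n (liftLast n π) = π := by
  rw [restrictLast, liftLast_apply, ← permCongr_symm, apply_symm_apply, removeNone_optionCongr]

theorem liftLast_restrictLast {σ : Perm (Fin (n + 1))} (hσ : σ (Fin.last n) = Fin.last n) :
    liftLast n (restrictLast n σ) = σ := by
  have hnone : (finSuccEquivLast (n := n)).permCongr σ none = none := by
    simp [finSuccEquivLast_symm_none, hσ, finSuccEquivLast_last]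
  rw [liftLast_apply, restrictLast, map_equiv_removeNone, hnone, swap_self, ← Perm.one_def,
    one_mul]
  exact finSuccEquivLast.permCongr.symm_apply_apply σ

theorem liftLast_mul_mul_apply_last_eq_iff (π τ : Perm (Fin n)) (σ : Perm (Fin (n + 1))) :
    (liftLast n π * σ * liftLast n τ) (Fin.last n) = Fin.last n ↔ σ (Fin.last n) = Fin.last n := by
  have h := (liftLast n π).apply_eq_iff_eq (x := σ (Fin.last n)) (y := Fin.last n)
  rw [liftLast_apply_last] at h
  simpa using h

theorem restrictLast_liftLast_mul_mul (π τ : Perm (Fin n)) {σ : Perm (Fin (n + 1))}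
    (hσ : σ (Fin.last n) = Fin.last n) :
    restrictLast n (liftLast n π * σ * liftLast n τ) = π * restrictLast n σ * τ := by
  rw [← liftLast_restrictLast hσ, ← map_mul, ← map_mul, restrictLast_liftLast,
    restrictLast_liftLast]

end liftLast

section Emap

variable {n : ℕ}

theorem Emap_of (σ : Perm (Fin (n + 1))) :
    Emap n (of ℚ _ σ) = if σ (Fin.last n) = Fin.last n then of ℚ _ (restrictLast n σ) else 0 := by
  split_ifs <;> simp [Emap, coeff_single, *]

theorem Emap_of_liftLast_mul_mul_of_liftLast (π τ : Perm (Fin n)) (a : QSn (n + 1)) :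
    Emap n (of ℚ _ (liftLast n π) * a * of ℚ _ (liftLast n τ)) =
      of ℚ _ π * Emap n a * of ℚ _ τ := by
  induction a using MonoidAlgebra.induction_on with
  | of σ =>
    simp only [← map_mul, Emap_of, liftLast_mul_mul_apply_last_eq_iff]
    split_ifs with hσ
    · rw [restrictLast_liftLast_mul_mul π τ hσ, map_mul, map_mul]
    · simp
  | add x y hx hy => simp only [mul_add, add_mul, map_add, hx, hy]
  | smul c x hx => simp only [mul_smul_comm, smul_mul_assoc, map_smul, hx]

end Emap

theorem commute_of_liftLast_XJM (n : ℕ) (π : Perm (Fin n)) :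
    Commute (of ℚ _ (liftLast n π)) (XJM n) := by
  simp only [Commute, SemiconjBy, XJM, Finset.mul_sum, Finset.sum_mul, ← map_mul,
    mul_swap_eq_swap_mul, liftLast_apply_castSucc, liftLast_apply_last]
  exact Equiv.sum_comp π fun j => of ℚ _ (swap j.castSucc (Fin.last n) * liftLast n π)

/-- `M_n^r = E(X_{n+1}^r)` is central in `ℚ[S_n]`. -/
theorem Mnr_central (n r : ℕ) :
    Emap n (XJM n ^ r) ∈ Subalgebra.center ℚ (QSn n) := by
  refine mem_center_of_forall_commute_of fun π => ?_
  have hX : Commute (of ℚ _ (liftLast n π)) (XJM n ^ r) := (commute_of_liftLast_XJM n π).pow_right r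
  calc of ℚ _ π * Emap n (XJM n ^ r)
      = Emap n (of ℚ _ (liftLast n π) * XJM n ^ r * of ℚ _ (liftLast n 1)) := by
        rw [Emap_of_liftLast_mul_mul_of_liftLast, map_one, mul_one]
    _ = Emap n (of ℚ _ (liftLast n 1) * XJM n ^ r * of ℚ _ (liftLast n π)) := by
        rw [hX.eq, map_one, map_one, one_mul, mul_one]
    _ = Emap n (XJM n ^ r) * of ℚ _ π := by
        rw [Emap_of_liftLast_mul_mul_of_liftLast, map_one, one_mul]
end
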